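/- arXiv:1710.05333 — 2 statements merged into one kernel-verified Lean document; each statement's English description precedes it below -/
import Mathlib

section
/- If g: 2^P → ℝ is nonnegative, monotone, and submodular with g(∅) = 0, then the greedy algorithm that iteratively adds the element of maximum marginal gain produces, after b steps, a set S_b with g(S_b) ≥ (1 − (1 − 1/b)^b) · max_{|S| ≤ b} g(S) ≥ (1 − 1/e) · max_{|S| ≤ b} g(S). -/
open Finset

/-- Nemhauser–Wolsey: greedy on a nonnegative monotone submodular function achieves a
(1 − (1 − 1/b)^b) ≥ (1 − 1/e) approximation of the optimum over sets of cardinality ≤ b. -/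
theorem greedy_approximation {κ : Type*} [DecidableEq κ]
    (P : Finset κ) (b : ℕ) (hb : 0 < b) (hbP : b ≤ P.card)
    (g : Finset κ → ℝ)
    (hg0 : g ∅ = 0)
    (hnonneg : ∀ S : Finset κ, S ⊆ P → 0 ≤ g S)
    (hmono : ∀ S T : Finset κ, S ⊆ T → T ⊆ P → g S ≤ g T)
    (hsub : ∀ S T : Finset κ, S ⊆ T → T ⊆ P → ∀ p ∈ P, p ∉ T →
      g (insert p S) - g S ≥ g (insert p T) - g T)
    (S : ℕ → Finset κ)
    (hS0 : S 0 = ∅)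
    (hSP : ∀ t, S t ⊆ P)
    (hgreedy : ∀ t, t < b → ∃ p ∈ P, p ∉ S t ∧ S (t + 1) = insert p (S t) ∧
      ∀ q ∈ P, q ∉ S t →
        g (insert q (S t)) - g (S t) ≤ g (insert p (S t)) - g (S t)) :
    (∀ T : Finset κ, T ⊆ P → T.card ≤ b →
      (1 - (1 - 1 / (b : ℝ)) ^ b) * g T ≤ g (S b)) ∧
    (∀ T : Finset κ, T ⊆ P → T.card ≤ b →
      (1 - 1 / Real.exp 1) * g T ≤ g (S b)) := by
  have hbpos : (0:ℝ) < b := by exact_mod_cast hb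
  have hb' : (1:ℝ) ≤ b := by exact_mod_cast hb
  have hfac : (0:ℝ) ≤ 1 - 1/b := by
    rw [sub_nonneg, div_le_one hbpos]; exact hb'
  -- telescoping lemma
  have tel : ∀ (A C : Finset κ), A ⊆ P → C ⊆ P → Disjoint A C →
      g (C ∪ A) - g C ≤ ∑ p ∈ A, (g (insert p C) - g C) := by
    intro A
    induction A using Finset.induction_on with
    | empty => intro C _ _ _; simp
    | @insert a A ha ih =>
      intro C hAP hCP hdisj
      have hA : A ⊆ P := (subset_insert a A).trans hAP
      have haP : a ∈ P := hAP (mem_insert_self a A)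
      have haC : a ∉ C := (Finset.disjoint_insert_left.mp hdisj).1
      have hdisj' : Disjoint A C := (Finset.disjoint_insert_left.mp hdisj).2
      have haCA : a ∉ C ∪ A := by simp [Finset.mem_union, ha, haC]
      have h1 := hsub C (C ∪ A) Finset.subset_union_left
        (Finset.union_subset hCP hA) a haP haCA
      have h2 := ih C hA hCP hdisj'
      rw [Finset.sum_insert ha, Finset.union_insert]
      linarith
  -- key per-step inequality
  have step : ∀ T : Finset κ, T ⊆ P → T.card ≤ b → ∀ t, t < b →
      g T - g (S t) ≤ b * (g (S (t+1)) - g (S t)) := by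
    intro T hTP hTb t ht
    obtain ⟨p, hpP, hpS, hSt1, hmax⟩ := hgreedy t ht
    have hM0 : 0 ≤ g (S (t+1)) - g (S t) := by
      rw [hSt1]
      have := hmono (S t) (insert p (S t)) (subset_insert _ _)
        (Finset.insert_subset hpP (hSP t))
      linarith
    have hsd : T \ S t ⊆ P := (Finset.sdiff_subset).trans hTP
    have h1 : g T ≤ g (S t ∪ (T \ S t)) := by
      apply hmono _ _ _ (Finset.union_subset (hSP t) hsd)
      intro x hx
      by_cases h : x ∈ S t <;> simp [Finset.mem_union, Finset.mem_sdiff, h, hx]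
    have h2 := tel (T \ S t) (S t) hsd (hSP t) Finset.sdiff_disjoint
    have h3 : ∑ q ∈ T \ S t, (g (insert q (S t)) - g (S t)) ≤
        ((T \ S t).card : ℝ) * (g (S (t+1)) - g (S t)) := by
      have := Finset.sum_le_card_nsmul (T \ S t)
        (fun q => g (insert q (S t)) - g (S t)) (g (S (t+1)) - g (S t))
        (by
          intro q hq
          rw [Finset.mem_sdiff] at hq
          rw [hSt1]
          exact hmax q (hTP hq.1) hq.2)
      simpa [nsmul_eq_mul] using this
    have hcard : ((T \ S t).card : ℝ) ≤ b := by
      exact_mod_cast (Finset.card_le_card Finset.sdiff_subset).trans hTb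
    have h4 : ((T \ S t).card : ℝ) * (g (S (t+1)) - g (S t)) ≤
        (b : ℝ) * (g (S (t+1)) - g (S t)) := mul_le_mul_of_nonneg_right hcard hM0
    linarith
  have key : ∀ T : Finset κ, T ⊆ P → T.card ≤ b →
      g T - g (S b) ≤ (1 - 1/(b:ℝ))^b * g T := by
    intro T hTP hTb
    have main : ∀ t, t ≤ b → g T - g (S t) ≤ (1 - 1/(b:ℝ))^t * g T := by
      intro t
      induction t with
      | zero => intro _; simp [hS0, hg0]
      | succ n ih =>
        intro hn
        have hnb : n < b := hn
        have h := ih (le_of_lt hnb)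
        have hstep := step T hTP hTb n hnb
        have hdiv : (g T - g (S n)) / b ≤ g (S (n+1)) - g (S n) :=
          (div_le_iff₀' hbpos).mpr hstep
        have hineq : g T - g (S (n+1)) ≤ (1 - 1/(b:ℝ)) * (g T - g (S n)) := by
          have : (1 - 1/(b:ℝ)) * (g T - g (S n)) =
              (g T - g (S n)) - (g T - g (S n)) / b := by
            field_simp
          rw [this]; linarith
        calc g T - g (S (n+1)) ≤ (1 - 1/(b:ℝ)) * (g T - g (S n)) := hineq
          _ ≤ (1 - 1/(b:ℝ)) * ((1 - 1/(b:ℝ))^n * g T) :=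
              mul_le_mul_of_nonneg_left h hfac
          _ = (1 - 1/(b:ℝ))^(n+1) * g T := by ring
    exact main b le_rfl
  have part1 : ∀ T : Finset κ, T ⊆ P → T.card ≤ b →
      (1 - (1 - 1 / (b : ℝ)) ^ b) * g T ≤ g (S b) := by
    intro T hTP hTb
    have h := key T hTP hTb
    have : (1 - (1 - 1 / (b : ℝ)) ^ b) * g T =
        g T - (1 - 1/(b:ℝ))^b * g T := by ring
    rw [this]; linarith
  refine ⟨part1, ?_⟩
  intro T hTP hTb
  have hexp : (1 - 1/(b:ℝ))^b ≤ 1 / Real.exp 1 := by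
    have h1 : 1 - 1/(b:ℝ) ≤ Real.exp (-(1/(b:ℝ))) := by
      have := Real.add_one_le_exp (-(1/(b:ℝ))); linarith
    calc (1 - 1/(b:ℝ))^b ≤ (Real.exp (-(1/(b:ℝ))))^b := pow_le_pow_left₀ hfac h1 b
      _ = Real.exp ((b:ℝ) * (-(1/(b:ℝ)))) := (Real.exp_nat_mul _ b).symm
      _ = Real.exp (-1) := by
          congr 1
          field_simp
      _ = 1 / Real.exp 1 := by rw [Real.exp_neg]; ring
  have h1 := part1 T hTP hTb
  have hgT : 0 ≤ g T := hnonneg T hTP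
  have : (1 - 1 / Real.exp 1) * g T ≤ (1 - (1 - 1 / (b : ℝ)) ^ b) * g T :=
    mul_le_mul_of_nonneg_right (by linarith) hgT
  linarith
end

section
/- For a monotone submodular g with g(∅)=0 and an optimal set S* with |S*| ≤ b, at any step of greedy with current set S_t, there exists p ∈ S* \ S_t (or g(S_t) ≥ g(S*)) with marginal gain Δ_g(p | S_t) ≥ (g(S*) − g(S_t)) / b. -/
/-!
Submodularity bounds the gain of adding all of `S* \ S_t` to `S_t` at once by the sum of the
single-element gains `Δ(p | S_t)`, and monotonicity makes that joint gain at least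
`g(S*) - g(S_t)`. Some term of a sum over at most `b` elements is at least the sum divided by `b`.
-/

open Finset

theorem exists_mem_div_card_le_of_le_sum {ι : Type*} {s : Finset ι} (hs : s.Nonempty)
    {f : ι → ℝ} {a : ℝ} (h : a ≤ ∑ i ∈ s, f i) : ∃ i ∈ s, a / #s ≤ f i := by
  refine exists_le_of_le_expect hs ?_
  rw [expect_eq_sum_div_card]
  gcongr

section

variable {κ : Type*} [DecidableEq κ]

/-- The marginal gain `Δ_g(p | S)`. -/
def marginalGain (g : Finset κ → ℝ) (S : Finset κ) (p : κ) : ℝ := g (insert p S) - g S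

def SubmodularOn (P : Finset κ) (g : Finset κ → ℝ) : Prop :=
  ∀ S T : Finset κ, S ⊆ T → T ⊆ P → ∀ p ∈ P, p ∉ T → marginalGain g T p ≤ marginalGain g S p

theorem SubmodularOn.sub_le_sum_marginalGain {P : Finset κ} {g : Finset κ → ℝ}
    (hsub : SubmodularOn P g) {S D : Finset κ} (hSP : S ⊆ P) (hDP : D ⊆ P)
    (hSD : Disjoint S D) : g (S ∪ D) - g S ≤ ∑ p ∈ D, marginalGain g S p := by
  induction D using Finset.induction_on with
  | empty => simp
  | insert a D haD ih =>
    have haP : a ∈ P := hDP (mem_insert_self a D)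
    have hDP' : D ⊆ P := (subset_insert a D).trans hDP
    obtain ⟨haS, hSD'⟩ := disjoint_insert_right.mp hSD
    have hdim := hsub S (S ∪ D) subset_union_left (union_subset hSP hDP') a haP
      (by simp [haS, haD])
    have hrest := ih hDP' hSD'
    rw [union_insert, sum_insert haD]
    unfold marginalGain at hdim hrest ⊢
    linarith

end

theorem greedy_key_lemma_general {κ : Type*} [DecidableEq κ]
    (P : Finset κ) (b : ℕ)
    (g : Finset κ → ℝ)
    (hmono : ∀ S T : Finset κ, S ⊆ T → T ⊆ P → g S ≤ g T)
    (hsub : ∀ S T : Finset κ, S ⊆ T → T ⊆ P → ∀ p ∈ P, p ∉ T →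
      g (insert p S) - g S ≥ g (insert p T) - g T)
    (Sstar St : Finset κ) (hstarP : Sstar ⊆ P) (hcard : Sstar.card ≤ b)
    (hStP : St ⊆ P) :
    g Sstar ≤ g St ∨
      ∃ p ∈ Sstar \ St,
        (g Sstar - g St) / (b : ℝ) ≤ g (insert p St) - g St := by
  rcases le_or_gt (g Sstar) (g St) with hle | hgt
  · exact Or.inl hle
  right
  have hgap : g Sstar - g St ≤ ∑ p ∈ Sstar \ St, marginalGain g St p := calc
    g Sstar - g St ≤ g (St ∪ Sstar \ St) - g St := by
      rw [union_sdiff_self_eq_union]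
      linarith [hmono Sstar (St ∪ Sstar) subset_union_right (union_subset hStP hstarP)]
    _ ≤ _ := SubmodularOn.sub_le_sum_marginalGain hsub hStP
      (sdiff_subset.trans hstarP) disjoint_sdiff
  have hne : (Sstar \ St).Nonempty := by
    by_contra hempty
    rw [not_nonempty_iff_eq_empty.mp hempty, sum_empty] at hgap
    linarith
  obtain ⟨p, hp, hgain⟩ := exists_mem_div_card_le_of_le_sum hne hgap
  refine ⟨p, hp, le_trans ?_ hgain⟩
  gcongr
  exact (card_le_card sdiff_subset).trans hcard

/-- Key lemma of the Nemhauser–Wolsey analysis: either greedy's current set already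
matches the optimum, or some element of S* \ S_t has marginal gain at least
(g(S*) − g(S_t))/b. -/
theorem greedy_key_lemma {κ : Type*} [DecidableEq κ]
    (P : Finset κ) (b : ℕ) (hb : 0 < b)
    (g : Finset κ → ℝ)
    (hg0 : g ∅ = 0)
    (hnonneg : ∀ S : Finset κ, S ⊆ P → 0 ≤ g S)
    (hmono : ∀ S T : Finset κ, S ⊆ T → T ⊆ P → g S ≤ g T)
    (hsub : ∀ S T : Finset κ, S ⊆ T → T ⊆ P → ∀ p ∈ P, p ∉ T →
      g (insert p S) - g S ≥ g (insert p T) - g T)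
    (Sstar St : Finset κ) (hstarP : Sstar ⊆ P) (hcard : Sstar.card ≤ b)
    (hStP : St ⊆ P) :
    g Sstar ≤ g St ∨
      ∃ p ∈ Sstar \ St,
        (g Sstar - g St) / (b : ℝ) ≤ g (insert p St) - g St :=
  greedy_key_lemma_general P b g hmono hsub Sstar St hstarP hcard hStP
end
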